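/- Let g: Y→Y', v: Y→Z, v': Y'→Z', h: Z→Z' be morphisms with v'∘g = h∘v, and suppose this square is homotopy cartesian with a given differential ∂: Z'→ΣY, i.e., Y →(g,v)ᵀ Y'⊕Z →[v', −h] Z' →∂ ΣY is a distinguished triangle. Then: (i) for every distinguished triangle X →u Y →v Z →w ΣX there exist morphisms u': X→Y' and w': Z'→ΣX such that X →u' Y' →v' Z' →w' ΣX is a distinguished triangle, the triple (1_X, g, h) is a good map of triangles between the two triangles, and ∂ = (Σu)∘w'; (ii) dually, for every distinguished triangle X →u' Y' →v' Z' →w' ΣX there exist morphisms u: X→Y and w: Z→ΣX such that X →u Y →v Z →w ΣX is a distinguished triangle, (1_X, g, h) is a good map of triangles, and ∂ = (Σu)∘w'. -/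

import Mathlib

open CategoryTheory Category Limits Pretriangulated

universe v u

variable {C : Type u} [Category.{v} C] [Preadditive C] [HasZeroObject C]
  [HasShift C ℤ] [∀ n : ℤ, (shiftFunctor C n).Additive] [Pretriangulated C]
  [IsTriangulated C] [HasBinaryBiproducts C]

noncomputable local instance (n : ℤ) : PreservesBinaryBiproducts (shiftFunctor C n) :=
  preservesBinaryBiproducts_of_preservesBiproducts _

/-- The condition that `(f, g, h)` is a morphism of triangles from `T` to `T'`. -/
def IsTriMap (T T' : Triangle C) (f : T.obj₁ ⟶ T'.obj₁) (g : T.obj₂ ⟶ T'.obj₂)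
    (h : T.obj₃ ⟶ T'.obj₃) : Prop :=
  T.mor₁ ≫ g = f ≫ T'.mor₁ ∧ T.mor₂ ≫ h = g ≫ T'.mor₂ ∧
    T.mor₃ ≫ f⟦(1 : ℤ)⟧' = h ≫ T'.mor₃

/-- The mapping cone of a morphism of triangles. -/
noncomputable def mappingCone (T T' : Triangle C) (f : T.obj₁ ⟶ T'.obj₁)
    (g : T.obj₂ ⟶ T'.obj₂) (h : T.obj₃ ⟶ T'.obj₃) : Triangle C :=
  Triangle.mk
    (biprod.desc (biprod.lift T'.mor₁ 0) (biprod.lift g (-T.mor₂)) :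
      T'.obj₁ ⊞ T.obj₂ ⟶ T'.obj₂ ⊞ T.obj₃)
    (biprod.desc (biprod.lift T'.mor₂ 0) (biprod.lift h (-T.mor₃)) :
      T'.obj₂ ⊞ T.obj₃ ⟶ T'.obj₃ ⊞ T.obj₁⟦(1 : ℤ)⟧)
    (biprod.desc (biprod.lift T'.mor₃ 0)
        (biprod.lift (f⟦(1 : ℤ)⟧') (-(T.mor₁⟦(1 : ℤ)⟧'))) ≫
      ((shiftFunctor C (1 : ℤ)).mapBiprod T'.obj₁ T.obj₂).inv)

/-- A morphism of triangles is good if its mapping cone is distinguished. -/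
noncomputable def IsGood (T T' : Triangle C) (f : T.obj₁ ⟶ T'.obj₁)
    (g : T.obj₂ ⟶ T'.obj₂) (h : T.obj₃ ⟶ T'.obj₃) : Prop :=
  mappingCone T T' f g h ∈ distTriang C

/-- An octahedron on composable maps `a`, `b`, given distinguished triangles
`(a, p₁, q₁)`, `(b, p₂, q₂)` and `(a ≫ b, p₃, q₃)`, is a pair `(m, n)` as below. -/
def IsOctahedron {A₁ A₂ A₃ B₁ B₂ B₃ : C} (a : A₁ ⟶ A₂) (b : A₂ ⟶ A₃)
    (p₁ : A₂ ⟶ B₁) (q₁ : B₁ ⟶ A₁⟦(1 : ℤ)⟧)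
    (p₂ : A₃ ⟶ B₂) (q₂ : B₂ ⟶ A₂⟦(1 : ℤ)⟧)
    (p₃ : A₃ ⟶ B₃) (q₃ : B₃ ⟶ A₁⟦(1 : ℤ)⟧)
    (m : B₁ ⟶ B₃) (n : B₃ ⟶ B₂) : Prop :=
  p₁ ≫ m = b ≫ p₃ ∧ m ≫ q₃ = q₁ ∧ p₃ ≫ n = p₂ ∧ n ≫ q₂ = q₃ ≫ a⟦(1 : ℤ)⟧' ∧
    (Triangle.mk m n (q₂ ≫ p₁⟦(1 : ℤ)⟧') ∈ distTriang C)

/-- A morphism of triangles `(f, g, h)` is Verdier good if `h` arises from Verdier's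
construction via two octahedra on the composite `g ∘ u = u' ∘ f`. -/
def IsVerdierGood (T T' : Triangle C) (f : T.obj₁ ⟶ T'.obj₁) (g : T.obj₂ ⟶ T'.obj₂)
    (h : T.obj₃ ⟶ T'.obj₃) : Prop :=
  ∃ (A Y'' X'' : C) (vt : T'.obj₂ ⟶ A) (wt : A ⟶ T.obj₁⟦(1 : ℤ)⟧)
    (g' : T'.obj₂ ⟶ Y'') (g'' : Y'' ⟶ T.obj₂⟦(1 : ℤ)⟧)
    (f' : T'.obj₁ ⟶ X'') (f'' : X'' ⟶ T.obj₁⟦(1 : ℤ)⟧)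
    (α₁ : T.obj₃ ⟶ A) (β₁ : A ⟶ Y'') (α₂ : X'' ⟶ A) (β₂ : A ⟶ T'.obj₃),
    (Triangle.mk (T.mor₁ ≫ g) vt wt ∈ distTriang C) ∧
    (Triangle.mk g g' g'' ∈ distTriang C) ∧
    (Triangle.mk f f' f'' ∈ distTriang C) ∧
    IsOctahedron T.mor₁ g T.mor₂ T.mor₃ g' g'' vt wt α₁ β₁ ∧
    IsOctahedron f T'.mor₁ f' f'' T'.mor₂ T'.mor₃ vt wt α₂ β₂ ∧
    h = α₁ ≫ β₂

/-- The morphism of triangles `(f, g, h)` is nullhomotopic, in the (equivalent)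
`Σ`-applied formulation of the first equation. -/
def IsNullHomotopic (T T' : Triangle C) (f : T.obj₁ ⟶ T'.obj₁) (g : T.obj₂ ⟶ T'.obj₂)
    (h : T.obj₃ ⟶ T'.obj₃) : Prop :=
  ∃ (F : T.obj₂ ⟶ T'.obj₁) (G : T.obj₃ ⟶ T'.obj₂) (H : T.obj₁⟦(1 : ℤ)⟧ ⟶ T'.obj₃),
    f⟦(1 : ℤ)⟧' = T.mor₁⟦(1 : ℤ)⟧' ≫ F⟦(1 : ℤ)⟧' + H ≫ T'.mor₃ ∧
    g = T.mor₂ ≫ G + F ≫ T'.mor₁ ∧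
    h = T.mor₃ ≫ H + G ≫ T'.mor₂

/-- A triangle is contractible if its identity morphism is nullhomotopic. -/
def IsContractible (T : Triangle C) : Prop :=
  IsNullHomotopic T T (𝟙 T.obj₁) (𝟙 T.obj₂) (𝟙 T.obj₃)

/-- A morphism of triangles is middling good if it extends to a 4 × 4 diagram. -/
def IsMiddlingGood (T T' : Triangle C) (f : T.obj₁ ⟶ T'.obj₁) (g : T.obj₂ ⟶ T'.obj₂)
    (h : T.obj₃ ⟶ T'.obj₃) : Prop :=
  ∃ (X'' Y'' Z'' : C)
    (f' : T'.obj₁ ⟶ X'') (f'' : X'' ⟶ T.obj₁⟦(1 : ℤ)⟧)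
    (g' : T'.obj₂ ⟶ Y'') (g'' : Y'' ⟶ T.obj₂⟦(1 : ℤ)⟧)
    (h' : T'.obj₃ ⟶ Z'') (h'' : Z'' ⟶ T.obj₃⟦(1 : ℤ)⟧)
    (u'' : X'' ⟶ Y'') (v'' : Y'' ⟶ Z'') (w'' : Z'' ⟶ X''⟦(1 : ℤ)⟧),
    (Triangle.mk f f' f'' ∈ distTriang C) ∧
    (Triangle.mk g g' g'' ∈ distTriang C) ∧
    (Triangle.mk h h' h'' ∈ distTriang C) ∧
    (Triangle.mk u'' v'' w'' ∈ distTriang C) ∧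
    T'.mor₁ ≫ g' = f' ≫ u'' ∧
    T'.mor₂ ≫ h' = g' ≫ v'' ∧
    T'.mor₃ ≫ f'⟦(1 : ℤ)⟧' = h' ≫ w'' ∧
    u'' ≫ g'' = f'' ≫ T.mor₁⟦(1 : ℤ)⟧' ∧
    v'' ≫ h'' = g'' ≫ T.mor₂⟦(1 : ℤ)⟧' ∧
    h'' ≫ T.mor₃⟦(1 : ℤ)⟧' = -(w'' ≫ f''⟦(1 : ℤ)⟧')

/-- A candidate triangle `(a, b, c)` is replaceably exact if each of its three maps
can be replaced to give a distinguished triangle. -/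
def ReplaceablyExact {A B D : C} (a : A ⟶ B) (b : B ⟶ D) (c : D ⟶ A⟦(1 : ℤ)⟧) : Prop :=
  (∃ a' : A ⟶ B, Triangle.mk a' b c ∈ distTriang C) ∧
  (∃ b' : B ⟶ D, Triangle.mk a b' c ∈ distTriang C) ∧
  (∃ c' : D ⟶ A⟦(1 : ℤ)⟧, Triangle.mk a b c' ∈ distTriang C)


open ZeroObject

namespace Stmt8Aux


noncomputable def biprodIsoPi (f : WalkingPair → C) :
    (f WalkingPair.left ⊞ f WalkingPair.right) ≅ ∏ᶜ f where
  hom := Pi.lift (fun j => WalkingPair.casesOn j biprod.fst biprod.snd)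
  inv := biprod.lift (Pi.π f WalkingPair.left) (Pi.π f WalkingPair.right)
  hom_inv_id := by ext <;> simp
  inv_hom_id := by
    apply limit.hom_ext
    rintro ⟨(_ | _)⟩ <;> simp

lemma sum_distinguished (T₁ T₂ : Triangle C) (h₁ : T₁ ∈ distTriang C)
    (h₂ : T₂ ∈ distTriang C) :
    Triangle.mk (biprod.map T₁.mor₁ T₂.mor₁) (biprod.map T₁.mor₂ T₂.mor₂)
      (biprod.map T₁.mor₃ T₂.mor₃ ≫
        ((shiftFunctor C (1 : ℤ)).mapBiprod T₁.obj₁ T₂.obj₁).inv) ∈ distTriang C := by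
  have : HasTerminal C := by infer_instance
  have : HasFiniteProducts C := hasFiniteProducts_of_has_binary_and_terminal
  let T : WalkingPair → Triangle C := fun j => WalkingPair.casesOn j T₁ T₂
  have hT : ∀ j, T j ∈ distTriang C := by rintro (_ | _) <;> assumption
  refine isomorphic_distinguished _ (productTriangle_distinguished T hT) _ ?_
  refine Triangle.isoMk _ _ (biprodIsoPi (fun j => (T j).obj₁))
    (biprodIsoPi (fun j => (T j).obj₂)) (biprodIsoPi (fun j => (T j).obj₃)) ?_ ?_ ?_
  · show biprod.map T₁.mor₁ T₂.mor₁ ≫ (biprodIsoPi (fun j => (T j).obj₂)).hom =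
      (biprodIsoPi (fun j => (T j).obj₁)).hom ≫ Limits.Pi.map (fun j => (T j).mor₁)
    apply limit.hom_ext
    rintro ⟨(_ | _)⟩ <;> simp [biprodIsoPi, T]
  · show biprod.map T₁.mor₂ T₂.mor₂ ≫ (biprodIsoPi (fun j => (T j).obj₃)).hom =
      (biprodIsoPi (fun j => (T j).obj₂)).hom ≫ Limits.Pi.map (fun j => (T j).mor₂)
    apply limit.hom_ext
    rintro ⟨(_ | _)⟩ <;> simp [biprodIsoPi, T]
  · show (biprod.map T₁.mor₃ T₂.mor₃ ≫
        biprod.desc ((shiftFunctor C (1 : ℤ)).map (biprod.inl : T₁.obj₁ ⟶ T₁.obj₁ ⊞ T₂.obj₁))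
          ((shiftFunctor C (1 : ℤ)).map (biprod.inr : T₂.obj₁ ⟶ T₁.obj₁ ⊞ T₂.obj₁))) ≫
        (biprodIsoPi (fun j => (T j).obj₁)).hom⟦(1 : ℤ)⟧' =
      (biprodIsoPi (fun j => (T j).obj₃)).hom ≫ (Limits.Pi.map (fun j => (T j).mor₃) ≫
        inv (piComparison (shiftFunctor C (1 : ℤ)) fun j => (T j).obj₁))
    rw [← cancel_mono (piComparison (shiftFunctor C (1 : ℤ)) (fun j => (T j).obj₁))]
    apply limit.hom_ext
    rintro ⟨(_ | _)⟩ <;>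
    · apply biprod.hom_ext'
      all_goals
        simp [biprodIsoPi, T, map_lift_piComparison,
          ← Functor.map_comp]


@[simps] noncomputable def shearIso {A B : C} (f : A ⟶ B) : (A ⊞ B) ≅ (A ⊞ B) where
  hom := biprod.desc (biprod.lift (𝟙 A) f) biprod.inr
  inv := biprod.desc (biprod.lift (𝟙 A) (-f)) biprod.inr
  hom_inv_id := by ext <;> simp
  inv_hom_id := by ext <;> simp

@[simps] noncomputable def zeroPadIso (A B : C) : (A ⊞ B) ≅ ((0 : C) ⊞ (A ⊞ B)) where
  hom := biprod.map (𝟙 A) (-𝟙 B) ≫ biprod.inr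
  inv := biprod.snd ≫ biprod.map (𝟙 A) (-𝟙 B)
  hom_inv_id := by ext <;> simp
  inv_hom_id := by
    ext
    all_goals
      first
        | apply (isZero_zero C).eq_of_tgt
        | apply (isZero_zero C).eq_of_src
        | simp

@[simps] noncomputable def swapShearIso {A B : C} (f : A ⟶ B) : (A ⊞ B) ≅ (B ⊞ A) where
  hom := biprod.desc (biprod.lift f (𝟙 A)) (biprod.lift (𝟙 B) 0)
  inv := biprod.desc (biprod.lift 0 (𝟙 B)) (biprod.lift (𝟙 A) (-f))
  hom_inv_id := by ext <;> simp
  inv_hom_id := by ext <;> simp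

lemma biprod_lift_map {P A B A' B' : C} (a : P ⟶ A) (b : P ⟶ B) (f : A ⟶ A') (g : B ⟶ B') :
    biprod.lift a b ≫ biprod.map f g = biprod.lift (a ≫ f) (b ≫ g) := by
  ext <;> simp

lemma biprod_lift_map_assoc {P A B A' B' Q : C} (a : P ⟶ A) (b : P ⟶ B) (f : A ⟶ A')
    (g : B ⟶ B') (k : A' ⊞ B' ⟶ Q) :
    biprod.lift a b ≫ biprod.map f g ≫ k = biprod.lift (a ≫ f) (b ≫ g) ≫ k := by
  rw [← assoc, biprod_lift_map]

lemma biprod_lift_desc_assoc {P A B Q R : C} (x : P ⟶ A) (y : P ⟶ B) (p : A ⟶ Q)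
    (q : B ⟶ Q) (k : Q ⟶ R) :
    biprod.lift x y ≫ biprod.desc p q ≫ k = x ≫ p ≫ k + y ≫ q ≫ k := by
  rw [← assoc, biprod.lift_desc, Preadditive.add_comp, assoc, assoc]

lemma good_aux {X Y Z Y' Z' : C} {u : X ⟶ Y} {v : Y ⟶ Z} {w : Z ⟶ X⟦(1 : ℤ)⟧}
    {u' : X ⟶ Y'} {v' : Y' ⟶ Z'} {w' : Z' ⟶ X⟦(1 : ℤ)⟧} {g : Y ⟶ Y'} {h : Z ⟶ Z'}
    (hT : Triangle.mk u v w ∈ distTriang C)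
    (hT' : Triangle.mk u' v' w' ∈ distTriang C)
    (hu : u ≫ g = u') (hw : h ≫ w' = w)
    (hHC : Triangle.mk (biprod.lift g v) (biprod.desc v' (-h))
      (w' ≫ u⟦(1 : ℤ)⟧') ∈ distTriang C) :
    mappingCone (Triangle.mk u v w) (Triangle.mk u' v' w') (𝟙 X) g h ∈ distTriang C := by
  have huv : u ≫ v = 0 := comp_distTriang_mor_zero₁₂ _ hT
  have hvw : v' ≫ w' = 0 := comp_distTriang_mor_zero₂₃ _ hT'
  refine isomorphic_distinguished _
    (sum_distinguished (Triangle.mk (0 : X ⟶ (0 : C)) (0 : (0 : C) ⟶ X⟦(1 : ℤ)⟧)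
        (𝟙 (X⟦(1 : ℤ)⟧))) (Triangle.mk (biprod.lift g v) (biprod.desc v' (-h))
        (w' ≫ u⟦(1 : ℤ)⟧')) (contractible_distinguished₂ X) hHC) _ ?_
  refine Triangle.isoMk _ _ (shearIso u) (zeroPadIso Y' Z) (swapShearIso w') ?_ ?_ ?_
  -- square 1
  · dsimp [mappingCone]
    show (biprod.desc (biprod.lift u' 0) (biprod.lift g (-v)) : X ⊞ Y ⟶ Y' ⊞ Z) ≫
        (zeroPadIso Y' Z).hom = (shearIso u).hom ≫ biprod.map (0 : X ⟶ 0) (biprod.lift g v)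
    ext
    all_goals
      first
        | apply (isZero_zero C).eq_of_tgt
        | simp [hu, huv]
  -- square 2
  · dsimp [mappingCone]
    show (biprod.desc (biprod.lift v' 0) (biprod.lift h (-w)) : Y' ⊞ Z ⟶ Z' ⊞ X⟦(1 : ℤ)⟧) ≫
        (swapShearIso w').hom =
      (zeroPadIso Y' Z).hom ≫ biprod.map (0 : (0 : C) ⟶ X⟦(1 : ℤ)⟧) (biprod.desc v' (-h))
    ext
    all_goals
      first
        | apply (isZero_zero C).eq_of_tgt
        | apply (isZero_zero C).eq_of_src
        | simp [hvw, hw]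
        | simp [hvw, ← hw]
  -- square 3
  · dsimp [mappingCone]
    show (biprod.desc (biprod.lift w' 0) (biprod.lift ((𝟙 X)⟦(1 : ℤ)⟧') (-(u⟦(1 : ℤ)⟧'))) ≫
        biprod.desc ((shiftFunctor C (1 : ℤ)).map (biprod.inl : X ⟶ X ⊞ Y))
          ((shiftFunctor C (1 : ℤ)).map (biprod.inr : Y ⟶ X ⊞ Y))) ≫ (shearIso u).hom⟦(1 : ℤ)⟧' =
      (swapShearIso w').hom ≫ (biprod.map (𝟙 (X⟦(1 : ℤ)⟧)) (w' ≫ u⟦(1 : ℤ)⟧') ≫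
        biprod.desc ((shiftFunctor C (1 : ℤ)).map (biprod.inl : X ⟶ X ⊞ Y))
          ((shiftFunctor C (1 : ℤ)).map (biprod.inr : Y ⟶ X ⊞ Y)))
    have hmono : Mono (biprod.lift ((shiftFunctor C (1 : ℤ)).map (biprod.fst : X ⊞ Y ⟶ X))
        ((shiftFunctor C (1 : ℤ)).map (biprod.snd : X ⊞ Y ⟶ Y))) :=
      (inferInstance : Mono ((shiftFunctor C (1 : ℤ)).mapBiprod X Y).hom)
    rw [← cancel_mono (biprod.lift ((shiftFunctor C (1 : ℤ)).map (biprod.fst : X ⊞ Y ⟶ X))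
        ((shiftFunctor C (1 : ℤ)).map (biprod.snd : X ⊞ Y ⟶ Y)))]
    ext
    all_goals
      simp [Functor.mapBiprod_inv, Functor.mapBiprod_hom, biprod_lift_map,
        biprod.lift_desc]
    all_goals
      simp only [biprod_lift_map_assoc, biprod_lift_desc_assoc, comp_id, id_comp,
        zero_comp, comp_zero, add_zero, zero_add, ← Functor.map_comp]
    all_goals
      simp


end Stmt8Aux

open Stmt8Aux

theorem stmt_8 {Y Z Y' Z' : C}
    (g : Y ⟶ Y') (v : Y ⟶ Z) (v' : Y' ⟶ Z') (h : Z ⟶ Z')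
    (hcomm : g ≫ v' = v ≫ h)
    (dd : Z' ⟶ Y⟦(1 : ℤ)⟧)
    (hHC : Triangle.mk (biprod.lift g v) (biprod.desc v' (-h)) dd ∈ distTriang C) :
    (∀ (X : C) (u : X ⟶ Y) (w : Z ⟶ X⟦(1 : ℤ)⟧),
      (Triangle.mk u v w ∈ distTriang C) →
      ∃ (u' : X ⟶ Y') (w' : Z' ⟶ X⟦(1 : ℤ)⟧),
        (Triangle.mk u' v' w' ∈ distTriang C) ∧
        IsTriMap (Triangle.mk u v w) (Triangle.mk u' v' w') (𝟙 X) g h ∧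
        IsGood (Triangle.mk u v w) (Triangle.mk u' v' w') (𝟙 X) g h ∧
        dd = w' ≫ u⟦(1 : ℤ)⟧') ∧
    (∀ (X : C) (u' : X ⟶ Y') (w' : Z' ⟶ X⟦(1 : ℤ)⟧),
      (Triangle.mk u' v' w' ∈ distTriang C) →
      ∃ (u : X ⟶ Y) (w : Z ⟶ X⟦(1 : ℤ)⟧),
        (Triangle.mk u v w ∈ distTriang C) ∧
        IsTriMap (Triangle.mk u v w) (Triangle.mk u' v' w') (𝟙 X) g h ∧
        IsGood (Triangle.mk u v w) (Triangle.mk u' v' w') (𝟙 X) g h ∧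
        dd = w' ≫ u⟦(1 : ℤ)⟧') := by
  constructor
  · -- part (i)
    intro X u w hT
    have comm : biprod.lift g v ≫ (biprod.snd : Y' ⊞ Z ⟶ Z) = v := biprod.lift_snd _ _
    have h₂₃ : Triangle.mk (biprod.snd : Y' ⊞ Z ⟶ Z) (0 : Z ⟶ Y'⟦(1 : ℤ)⟧)
        (-(biprod.inl : Y' ⟶ Y' ⊞ Z)⟦(1 : ℤ)⟧') ∈ distTriang C :=
      rot_of_distTriang _ (binaryBiproductTriangle_distinguished Y' Z)
    have h₁₃ : Triangle.mk v w (-u⟦(1 : ℤ)⟧') ∈ distTriang C := rot_of_distTriang _ hT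
    obtain ⟨m₁, m₃, oc₁, oc₂, oc₃, oc₄, omem⟩ :=
      Triangulated.someOctahedron comm hHC h₂₃ h₁₃
    have hm₃ : m₃ = (u ≫ g)⟦(1 : ℤ)⟧' := by
      have h4 : m₃ ≫ (biprod.inl : Y' ⟶ Y' ⊞ Z)⟦(1 : ℤ)⟧' =
          u⟦(1 : ℤ)⟧' ≫ (biprod.lift g v)⟦(1 : ℤ)⟧' := by
        have h5 := oc₄
        rw [Preadditive.neg_comp, Preadditive.comp_neg, neg_inj] at h5
        exact h5.symm
      have h6 := h4 =≫ (biprod.fst : Y' ⊞ Z ⟶ Y')⟦(1 : ℤ)⟧'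
      simpa [← Functor.map_comp] using h6
    have hhw : h ≫ (-m₁) = w := by
      have h7 : ((biprod.inr : Z ⟶ Y' ⊞ Z) ≫ biprod.desc v' (-h)) ≫ m₁ =
          ((biprod.inr : Z ⟶ Y' ⊞ Z) ≫ biprod.snd) ≫ w := by
        rw [assoc, assoc, oc₁]
      simpa using h7
    have hdd : dd = (-m₁) ≫ u⟦(1 : ℤ)⟧' := by
      rw [← oc₂]; simp
    have hT' : Triangle.mk (u ≫ g) v' (-m₁) ∈ distTriang C := by
      rw [rotate_distinguished_triangle, rotate_distinguished_triangle]
      refine isomorphic_distinguished _ omem _ ?_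
      refine Triangle.isoMk _ _ (Iso.refl _) ⟨-𝟙 (X⟦(1 : ℤ)⟧), -𝟙 (X⟦(1 : ℤ)⟧),
          by show (-𝟙 (X⟦(1 : ℤ)⟧)) ≫ (-𝟙 (X⟦(1 : ℤ)⟧)) = 𝟙 (X⟦(1 : ℤ)⟧); simp,
          by show (-𝟙 (X⟦(1 : ℤ)⟧)) ≫ (-𝟙 (X⟦(1 : ℤ)⟧)) = 𝟙 (X⟦(1 : ℤ)⟧); simp⟩
        (Iso.refl _) ?_ ?_ ?_
      · show (-m₁) ≫ (-𝟙 (X⟦(1 : ℤ)⟧)) = 𝟙 Z' ≫ m₁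
        simp
      · show (-(u ≫ g)⟦(1 : ℤ)⟧') ≫ 𝟙 (Y'⟦(1 : ℤ)⟧) = (-𝟙 (X⟦(1 : ℤ)⟧)) ≫ m₃
        simp [hm₃]
      · show (-v'⟦(1 : ℤ)⟧') ≫ (𝟙 Z')⟦(1 : ℤ)⟧' = 𝟙 (Y'⟦(1 : ℤ)⟧) ≫
          ((-(biprod.inl : Y' ⟶ Y' ⊞ Z)⟦(1 : ℤ)⟧') ≫ (biprod.desc v' (-h))⟦(1 : ℤ)⟧')
        simp [← Functor.map_comp]
    refine ⟨u ≫ g, -m₁, hT', ⟨by show u ≫ g = 𝟙 X ≫ (u ≫ g); simp, hcomm.symm,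
      by show w ≫ (𝟙 X)⟦(1 : ℤ)⟧' = h ≫ (-m₁); simpa using hhw.symm⟩, ?_, hdd⟩
    exact good_aux hT hT' rfl hhw (hdd ▸ hHC)
  · -- part (ii)
    intro X u' w' hT'
    have comm : (biprod.inl : Y' ⟶ Y' ⊞ Z) ≫ biprod.desc v' (-h) = v' :=
      biprod.inl_desc _ _
    have h₁₂ : Triangle.mk (biprod.inl : Y' ⟶ Y' ⊞ Z) biprod.snd
        (0 : Z ⟶ Y'⟦(1 : ℤ)⟧) ∈ distTriang C :=
      binaryBiproductTriangle_distinguished Y' Z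
    have h₂₃ : Triangle.mk (biprod.desc v' (-h)) dd
        (-(biprod.lift g v)⟦(1 : ℤ)⟧') ∈ distTriang C := rot_of_distTriang _ hHC
    have h₁₃ : Triangle.mk v' w' (-u'⟦(1 : ℤ)⟧') ∈ distTriang C :=
      rot_of_distTriang _ hT'
    obtain ⟨m₁, m₃, oc₁, oc₂, oc₃, oc₄, omem⟩ :=
      Triangulated.someOctahedron comm h₁₂ h₂₃ h₁₃
    set u : X ⟶ Y := (shiftFunctor C (1 : ℤ)).preimage m₃ with hu_def
    have hu : u⟦(1 : ℤ)⟧' = m₃ := (shiftFunctor C (1 : ℤ)).map_preimage m₃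
    have hm₁ : m₁ = -(h ≫ w') := by
      have h7 : ((biprod.inr : Z ⟶ Y' ⊞ Z) ≫ biprod.snd) ≫ m₁ =
          ((biprod.inr : Z ⟶ Y' ⊞ Z) ≫ biprod.desc v' (-h)) ≫ w' := by
        rw [assoc, assoc, oc₁]
      simpa using h7
    have hug : u ≫ g = u' := by
      apply (shiftFunctor C (1 : ℤ)).map_injective
      rw [Functor.map_comp, hu]
      have h4 := oc₄ =≫ (biprod.fst : Y' ⊞ Z ⟶ Y')⟦(1 : ℤ)⟧'
      simp only [Preadditive.neg_comp, Preadditive.comp_neg, assoc,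
        ← Functor.map_comp, biprod.inl_fst, biprod.lift_fst, Functor.map_id,
        comp_id, neg_inj] at h4
      exact h4.symm
    have hdd : dd = w' ≫ u⟦(1 : ℤ)⟧' := by rw [hu, oc₃]
    have hT : Triangle.mk u v (h ≫ w') ∈ distTriang C := by
      rw [rotate_distinguished_triangle, rotate_distinguished_triangle]
      refine isomorphic_distinguished _ omem _ ?_
      refine Triangle.isoMk _ _ (Iso.refl _) ⟨-𝟙 (X⟦(1 : ℤ)⟧), -𝟙 (X⟦(1 : ℤ)⟧),
          by show (-𝟙 (X⟦(1 : ℤ)⟧)) ≫ (-𝟙 (X⟦(1 : ℤ)⟧)) = 𝟙 (X⟦(1 : ℤ)⟧); simp,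
          by show (-𝟙 (X⟦(1 : ℤ)⟧)) ≫ (-𝟙 (X⟦(1 : ℤ)⟧)) = 𝟙 (X⟦(1 : ℤ)⟧); simp⟩
        (Iso.refl _) ?_ ?_ ?_
      · show (h ≫ w') ≫ (-𝟙 (X⟦(1 : ℤ)⟧)) = 𝟙 Z ≫ m₁
        simp [hm₁]
      · show (-u⟦(1 : ℤ)⟧') ≫ 𝟙 (Y⟦(1 : ℤ)⟧) = (-𝟙 (X⟦(1 : ℤ)⟧)) ≫ m₃
        simp [hu]
      · show (-v⟦(1 : ℤ)⟧') ≫ (𝟙 Z)⟦(1 : ℤ)⟧' = 𝟙 (Y⟦(1 : ℤ)⟧) ≫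
          ((-(biprod.lift g v)⟦(1 : ℤ)⟧') ≫ (biprod.snd : Y' ⊞ Z ⟶ Z)⟦(1 : ℤ)⟧')
        simp [← Functor.map_comp]
    refine ⟨u, h ≫ w', hT, ⟨by show u ≫ g = 𝟙 X ≫ u'; simp [hug], hcomm.symm,
      by show (h ≫ w') ≫ (𝟙 X)⟦(1 : ℤ)⟧' = h ≫ w'; simp⟩, ?_, hdd⟩
    exact good_aux hT hT' hug rfl (hdd ▸ hHC)
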